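/- arXiv:1308.0586 — 3 statements merged into one kernel-verified Lean document; each statement's English description precedes it below -/
import Mathlib

section
/- Let f : ℝⁿ → ℝⁿ be continuously differentiable with Jacobian J(x), let |·| be a norm on ℝⁿ with induced matrix norm ‖·‖ and matrix measure μ(A) = lim_{h→0⁺} (‖I + hA‖ − 1)/h. If there exists c > 0 such that μ(J(x)) ≤ −c for all x, then for every solution x(t) of ẋ = f(x), the inequality |f(x(t))| ≤ |f(x(0))| e^{−ct} holds for all t ≥ 0. -/
open Matrix Filter Set Topology

/-- `N` is a norm on `ℝⁿ`. -/
def IsNorm {n : ℕ} (N : (Fin n → ℝ) → ℝ) : Prop :=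
  (∀ v, N v = 0 ↔ v = 0) ∧
  (∀ (c : ℝ) v, N (c • v) = |c| * N v) ∧
  (∀ u v, N (u + v) ≤ N u + N v)

/-- Operator (induced matrix) norm of `A` with respect to the vector norm `N`. -/
noncomputable def opNorm {n : ℕ} (N : (Fin n → ℝ) → ℝ)
    (A : Matrix (Fin n) (Fin n) ℝ) : ℝ :=
  sSup ((fun v => N (A.mulVec v)) '' {v | N v ≤ 1})

/-- Matrix measure (logarithmic norm): `μ(A) = lim_{h→0⁺} (‖I + hA‖ − 1)/h`. -/
noncomputable def matMeasure {n : ℕ} (N : (Fin n → ℝ) → ℝ)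
    (A : Matrix (Fin n) (Fin n) ℝ) : ℝ :=
  limUnder (𝓝[>] (0:ℝ)) (fun h => (opNorm N (1 + h • A) - 1) / h)

/-- The Jacobian matrix of `f` at `x`. -/
noncomputable def jac {n : ℕ} (f : (Fin n → ℝ) → (Fin n → ℝ)) (x : Fin n → ℝ) :
    Matrix (Fin n) (Fin n) ℝ :=
  LinearMap.toMatrix' (fderiv ℝ f x).toLinearMap

/-- Upper right Dini derivative. -/
noncomputable def diniUpper (φ : ℝ → ℝ) (t : ℝ) : ℝ :=
  limsup (fun h => (φ (t + h) - φ t) / h) (𝓝[>] (0:ℝ))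

/-!
Along a solution, `y(t) = f(x(t))` satisfies `ẏ = J(x(t)) y`. Once `ℝⁿ` is given `N` as its norm,
the matrix measure is the logarithmic norm `lim_{h→0⁺} (‖1 + h T‖ - 1) / h` of `J` as an operator,
a limit that exists because `h ↦ ‖1 + h T‖` is convex. Since `y(t + h) = (1 + h J) y(t) + o(h)`,
the right Dini derivative of `‖y‖` is at most `μ(J) ‖y‖ ≤ -c ‖y‖`, and Grönwall's inequality
gives the exponential decay.
-/

theorem convexOn_norm_add_smul {E : Type*} [NormedAddCommGroup E] [NormedSpace ℝ E] (b a : E) :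
    ConvexOn ℝ univ fun h : ℝ => ‖b + h • a‖ := by
  have hline : (fun h : ℝ => ‖b + h • a‖) = norm ∘ AffineMap.lineMap b (b + a) := by
    ext h
    simp [AffineMap.lineMap_apply_module', add_comm]
  rw [hline, ← preimage_univ]
  exact (convexOn_norm convex_univ).comp_affineMap _

section LogNorm

variable {R : Type*} [NormedRing R] [NormedAlgebra ℝ R]

/-- The quotient below is monotone in `h` (`monotoneOn_logNorm_quotient`), so its infimum is its
limit as `h → 0⁺` (`tendsto_logNorm`). -/
noncomputable def logNorm (a : R) : ℝ :=
  sInf ((fun h : ℝ => (‖1 + h • a‖ - 1) / h) '' Ioi 0)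

theorem monotoneOn_logNorm_quotient [NormOneClass R] (a : R) :
    MonotoneOn (fun h : ℝ => (‖1 + h • a‖ - 1) / h) (Ioi 0) := by
  intro h₁ h₁pos h₂ h₂pos hle
  simpa using (convexOn_norm_add_smul 1 a).secant_mono (mem_univ 0) (mem_univ h₁) (mem_univ h₂)
    (ne_of_gt h₁pos) (ne_of_gt h₂pos) hle

theorem neg_norm_le_logNorm_quotient [NormOneClass R] (a : R) {h : ℝ} (hh : 0 < h) :
    -‖a‖ ≤ (‖1 + h • a‖ - 1) / h := by
  have : ‖(1 : R)‖ ≤ ‖1 + h • a‖ + ‖h • a‖ := norm_le_add_norm_add _ _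
  rw [norm_one, norm_smul, Real.norm_of_nonneg hh.le] at this
  rw [le_div_iff₀ hh]
  linarith

theorem tendsto_logNorm [NormOneClass R] (a : R) :
    Tendsto (fun h : ℝ => (‖1 + h • a‖ - 1) / h) (𝓝[>] 0) (𝓝 (logNorm a)) :=
  (monotoneOn_logNorm_quotient a).tendsto_nhdsGT
    ⟨-‖a‖, by rintro _ ⟨h, hh, rfl⟩; exact neg_norm_le_logNorm_quotient a hh⟩

end LogNorm

section Decay

variable {E : Type*} [NormedAddCommGroup E] [NormedSpace ℝ E]

theorem slope_norm_le (T : E →L[ℝ] E) (u w : E) {h : ℝ} (hh : 0 < h) :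
    h⁻¹ * (‖w‖ - ‖u‖) ≤ (‖1 + h • T‖ - 1) / h * ‖u‖ + ‖h⁻¹ • (w - u) - T u‖ := by
  set d := h⁻¹ • (w - u) - T u
  have hw : w = (1 + h • T) u + h • d := by
    simp only [d, _root_.add_apply, one_apply_eq_self, _root_.smul_apply, smul_sub, smul_smul,
      mul_inv_cancel₀ hh.ne', one_smul, add_add_sub_cancel, add_sub_cancel]
  have hnorm : ‖w‖ ≤ ‖1 + h • T‖ * ‖u‖ + h * ‖d‖ :=
    calc ‖w‖ ≤ ‖(1 + h • T) u‖ + ‖h • d‖ := hw ▸ norm_add_le _ _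
      _ ≤ ‖1 + h • T‖ * ‖u‖ + h * ‖d‖ := by
        rw [norm_smul, Real.norm_of_nonneg hh.le]
        exact add_le_add_left ((1 + h • T).le_opNorm u) _
  calc h⁻¹ * (‖w‖ - ‖u‖) ≤ h⁻¹ * ((‖1 + h • T‖ - 1) * ‖u‖ + h * ‖d‖) := by
        gcongr
        linarith
    _ = (‖1 + h • T‖ - 1) / h * ‖u‖ + ‖d‖ := by
        field_simp

theorem eventually_slope_norm_lt {T : E →L[ℝ] E} {μ : ℝ}
    (hμ : Tendsto (fun h : ℝ => (‖1 + h • T‖ - 1) / h) (𝓝[>] 0) (𝓝 μ))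
    {y : ℝ → E} {t : ℝ} (hy : HasDerivWithinAt y (T (y t)) (Ici t) t) {r : ℝ}
    (hr : μ * ‖y t‖ < r) :
    ∀ᶠ z in 𝓝[>] t, (z - t)⁻¹ * (‖y z‖ - ‖y t‖) < r := by
  have hshift : Tendsto (fun z => z - t) (𝓝[>] t) (𝓝[>] 0) := by
    refine tendsto_nhdsWithin_iff.2 ⟨?_, ?_⟩
    · exact ((continuous_sub_right t).tendsto' t 0 (sub_self t)).mono_left nhdsWithin_le_nhds
    · filter_upwards [self_mem_nhdsWithin] with z (hz : t < z)
      exact sub_pos.2 hz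
  have hrem : Tendsto (fun z => ‖(z - t)⁻¹ • (y z - y t) - T (y t)‖) (𝓝[>] t) (𝓝 0) := by
    have hIoi : Ioi t ⊆ Ici t \ {t} := fun _ (hz : t < _) => ⟨le_of_lt hz, ne_of_gt hz⟩
    have hslope := (hasDerivWithinAt_iff_tendsto_slope.1 hy).mono_left (nhdsWithin_mono t hIoi)
    rw [slope_fun_def] at hslope
    simpa using (hslope.sub_const (T (y t))).norm
  have hbound : Tendsto (fun z => (‖1 + (z - t) • T‖ - 1) / (z - t) * ‖y t‖ +
      ‖(z - t)⁻¹ • (y z - y t) - T (y t)‖) (𝓝[>] t) (𝓝 (μ * ‖y t‖)) := by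
    simpa using ((hμ.comp hshift).mul_const ‖y t‖).add hrem
  filter_upwards [hbound.eventually_lt_const hr, self_mem_nhdsWithin] with z hz hzt
  exact (slope_norm_le T (y t) (y z) (sub_pos.2 hzt)).trans_lt hz

theorem norm_le_mul_exp_of_logNorm_le [Nontrivial E] {T : ℝ → E →L[ℝ] E} {c : ℝ}
    (hT : ∀ t ∈ Ici (0 : ℝ), logNorm (T t) ≤ -c) {y : ℝ → E}
    (hy : ∀ t ∈ Ici (0 : ℝ), HasDerivWithinAt y (T t (y t)) (Ici 0) t) :
    ∀ t ∈ Ici (0 : ℝ), ‖y t‖ ≤ ‖y 0‖ * Real.exp (-c * t) := by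
  intro t ht
  have hcont : ContinuousOn (fun s => ‖y s‖) (Icc 0 t) := fun s hs =>
    ((hy s hs.1).continuousWithinAt.norm).mono Icc_subset_Ici_self
  have hslope : ∀ s ∈ Ico (0 : ℝ) t, ∀ r, -c * ‖y s‖ < r →
      ∃ᶠ z in 𝓝[>] s, (z - s)⁻¹ * (‖y z‖ - ‖y s‖) < r := fun s hs r hr =>
    (eventually_slope_norm_lt (tendsto_logNorm (T s)) ((hy s hs.1).mono (Ici_subset_Ici.2 hs.1))
      ((mul_le_mul_of_nonneg_right (hT s hs.1) (norm_nonneg _)).trans_lt hr)).frequently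
  have hgronwall := le_gronwallBound_of_liminf_deriv_right_le hcont hslope le_rfl
    (fun _ _ => (add_zero _).ge) t ⟨ht, le_rfl⟩
  rwa [gronwallBound_ε0, sub_zero] at hgronwall

end Decay

theorem IsNorm.nonneg {n : ℕ} {N : (Fin n → ℝ) → ℝ} (hN : IsNorm N) (v : Fin n → ℝ) :
    0 ≤ N v := by
  have htri := hN.2.2 v (-v)
  have hneg := hN.2.1 (-1) v
  rw [add_neg_cancel, (hN.1 0).mpr rfl] at htri
  simp only [neg_smul, one_smul, abs_neg, abs_one, one_mul] at hneg
  linarith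

/-- `ℝⁿ` with `N` as its norm, a type synonym so that this norm does not clash with the sup norm of
`Fin n → ℝ`. -/
def WithNorm {n : ℕ} (_N : (Fin n → ℝ) → ℝ) : Type := Fin n → ℝ

namespace WithNorm

variable {n : ℕ} (N : (Fin n → ℝ) → ℝ)

instance : AddCommGroup (WithNorm N) := inferInstanceAs (AddCommGroup (Fin n → ℝ))
instance : Module ℝ (WithNorm N) := inferInstanceAs (Module ℝ (Fin n → ℝ))
instance : FiniteDimensional ℝ (WithNorm N) := inferInstanceAs (FiniteDimensional ℝ (Fin n → ℝ))
instance : Norm (WithNorm N) := ⟨N⟩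

variable [hN : Fact (IsNorm N)]

theorem normedSpaceCore : NormedSpace.Core ℝ (WithNorm N) where
  norm_nonneg v := hN.out.nonneg v
  norm_smul c v := hN.out.2.1 c v
  norm_triangle u v := hN.out.2.2 u v
  norm_eq_zero_iff v := hN.out.1 v

noncomputable instance : NormedAddCommGroup (WithNorm N) := .ofCore (normedSpaceCore N)
noncomputable instance : NormedSpace ℝ (WithNorm N) := .ofCore (normedSpaceCore N)

noncomputable def equiv : (Fin n → ℝ) ≃L[ℝ] WithNorm N :=
  LinearEquiv.toContinuousLinearEquiv
    { toFun v := v, invFun v := v, map_add' _ _ := rfl, map_smul' _ _ := rfl,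
      left_inv _ := rfl, right_inv _ := rfl }

noncomputable def mulVecCLM (A : Matrix (Fin n) (Fin n) ℝ) : WithNorm N →L[ℝ] WithNorm N :=
  LinearMap.toContinuousLinearMap (Matrix.toLin' A : (Fin n → ℝ) →ₗ[ℝ] (Fin n → ℝ))

theorem opNorm_eq_norm_mulVecCLM (A : Matrix (Fin n) (Fin n) ℝ) :
    opNorm N A = ‖mulVecCLM N A‖ := by
  rw [opNorm, ← ContinuousLinearMap.sSup_unitClosedBall_eq_norm]
  congr 1
  ext
  simp only [mem_image, mem_closedBall_zero_iff]
  rfl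

theorem mulVecCLM_one_add_smul (h : ℝ) (A : Matrix (Fin n) (Fin n) ℝ) :
    mulVecCLM N (1 + h • A) = 1 + h • mulVecCLM N A := by
  ext v
  change (1 + h • A) *ᵥ (show Fin n → ℝ from v) =
    (show Fin n → ℝ from v) + h • (A *ᵥ (show Fin n → ℝ from v))
  rw [Matrix.add_mulVec, Matrix.one_mulVec, Matrix.smul_mulVec]

theorem matMeasure_eq_logNorm [Nontrivial (WithNorm N)] (A : Matrix (Fin n) (Fin n) ℝ) :
    matMeasure N A = logNorm (mulVecCLM N A) := by
  have hquot : (fun h : ℝ => (opNorm N (1 + h • A) - 1) / h) =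
      fun h : ℝ => (‖1 + h • mulVecCLM N A‖ - 1) / h := by
    ext h
    rw [opNorm_eq_norm_mulVecCLM, mulVecCLM_one_add_smul]
  rw [matMeasure, hquot, (tendsto_logNorm _).limUnder_eq]

end WithNorm

theorem jac_mulVec {n : ℕ} (f : (Fin n → ℝ) → (Fin n → ℝ)) (z v : Fin n → ℝ) :
    jac f z *ᵥ v = fderiv ℝ f z v := by
  rw [jac, ← Matrix.toLin'_apply, Matrix.toLin'_toMatrix']
  rfl

theorem stmt_0_general {n : ℕ} (N : (Fin n → ℝ) → ℝ) (hN : IsNorm N)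
    (f : (Fin n → ℝ) → (Fin n → ℝ)) (hf : ContDiff ℝ 1 f)
    (c : ℝ) (hμ : ∀ x, matMeasure N (jac f x) ≤ -c)
    (x : ℝ → (Fin n → ℝ))
    (hx : ∀ t ∈ Ici (0:ℝ), HasDerivWithinAt x (f (x t)) (Ici 0) t) :
    ∀ t ∈ Ici (0:ℝ), N (f (x t)) ≤ N (f (x 0)) * Real.exp (-c * t) := by
  have : Fact (IsNorm N) := ⟨hN⟩
  let y : ℝ → WithNorm N := fun t => WithNorm.equiv N (f (x t))
  have hy : ∀ t ∈ Ici (0 : ℝ),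
      HasDerivWithinAt y (WithNorm.mulVecCLM N (jac f (x t)) (y t)) (Ici 0) t := by
    intro t ht
    have hfx := (hf.differentiable one_ne_zero (x t)).hasFDerivAt.comp_hasDerivWithinAt t (hx t ht)
    rw [Function.comp_def, ← jac_mulVec] at hfx
    exact (WithNorm.equiv N).hasFDerivAt.comp_hasDerivWithinAt t hfx
  rcases subsingleton_or_nontrivial (WithNorm N) with hE | hE
  · intro t _
    have hzero : ∀ s, N (f (x s)) = 0 := fun s => norm_eq_zero.2 (Subsingleton.elim (y s) 0)
    simp [hzero]
  · exact norm_le_mul_exp_of_logNorm_le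
      (fun t _ => WithNorm.matMeasure_eq_logNorm N (jac f (x t)) ▸ hμ (x t)) hy

/-- Main theorem: if `μ(J(x)) ≤ -c < 0` for all `x`, then `|f(x(t))| ≤ |f(x(0))| e^{-ct}`. -/
theorem stmt_0 {n : ℕ} (N : (Fin n → ℝ) → ℝ) (hN : IsNorm N)
    (f : (Fin n → ℝ) → (Fin n → ℝ)) (hf : ContDiff ℝ 1 f)
    (c : ℝ) (hc : 0 < c) (hμ : ∀ x, matMeasure N (jac f x) ≤ -c)
    (x : ℝ → (Fin n → ℝ))
    (hx : ∀ t ∈ Ici (0:ℝ), HasDerivWithinAt x (f (x t)) (Ici 0) t) :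
    ∀ t ∈ Ici (0:ℝ), N (f (x t)) ≤ N (f (x 0)) * Real.exp (-c * t) :=
  stmt_0_general N hN f hf c hμ x hx
end

section
/- Krasovskii's theorem: Let f : ℝⁿ → ℝⁿ be C¹ with Jacobian J(x), and suppose there exist a symmetric positive definite matrix P and c > 0 such that P J(x) + J(x)ᵀ P ≤ −2c P (Loewner order) for all x. Then V(x) = f(x)ᵀ P f(x) satisfies V(x(t)) ≤ V(x(0)) e^{−2ct} along every solution of ẋ = f(x). -/
/-! Differentiating `V(t) = f(x(t))ᵀ P f(x(t))` along a solution gives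
`V' = (J f)ᵀ P f + fᵀ P (J f)` with `J = J(x(t))`, which the Loewner bound `PJ + JᵀP ≤ -2cP`
turns into `V' ≤ -2c V`; Grönwall's inequality then yields `V(t) ≤ V(0) e^{-2ct}`. -/

open Matrix Filter Set Topology

theorem HasDerivWithinAt.dotProduct_mulVec {ι : Type*} [Fintype ι] [DecidableEq ι]
    (P : Matrix ι ι ℝ) {g : ℝ → ι → ℝ} {g' : ι → ℝ} {s : Set ℝ} {t : ℝ}
    (hg : HasDerivWithinAt g g' s t) :
    HasDerivWithinAt (fun τ => g τ ⬝ᵥ P *ᵥ g τ) (g t ⬝ᵥ P *ᵥ g' + g' ⬝ᵥ P *ᵥ g t) s t := by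
  simpa only [LinearMap.toContinuousBilinearMap_apply, toLinearMap₂'_apply'] using
    (toLinearMap₂' ℝ P).toContinuousBilinearMap.hasDerivWithinAt_of_bilinear hg hg

theorem Matrix.PosSemidef.dotProduct_mulVec_mulVec_add_le {ι : Type*} [Fintype ι]
    {P J : Matrix ι ι ℝ} {c : ℝ} (h : (-(P * J + Jᵀ * P + (2 * c) • P)).PosSemidef)
    (v : ι → ℝ) :
    v ⬝ᵥ P *ᵥ (J *ᵥ v) + J *ᵥ v ⬝ᵥ P *ᵥ v ≤ -(2 * c) * (v ⬝ᵥ P *ᵥ v) := by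
  have hquad := h.dotProduct_mulVec_nonneg v
  have htranspose : v ⬝ᵥ Jᵀ *ᵥ (P *ᵥ v) = J *ᵥ v ⬝ᵥ P *ᵥ v := by
    rw [dotProduct_mulVec, vecMul_transpose]
  simp only [neg_mulVec, add_mulVec, smul_mulVec, ← mulVec_mulVec, dotProduct_neg,
    dotProduct_add, dotProduct_smul, star_trivial, smul_eq_mul, htranspose] at hquad
  linarith

theorem le_mul_exp_of_hasDerivWithinAt_le_mul {V V' : ℝ → ℝ} {K a : ℝ}
    (hV : ∀ s ∈ Ici a, HasDerivWithinAt V (V' s) (Ici a) s)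
    (hbound : ∀ s ∈ Ici a, V' s ≤ K * V s) :
    ∀ t ∈ Ici a, V t ≤ V a * Real.exp (K * (t - a)) := by
  intro t ht
  have hgronwall := le_gronwallBound_of_liminf_deriv_right_le (ε := 0) (b := t)
    (fun s hs => (hV s hs.1).continuousWithinAt.mono Icc_subset_Ici_self)
    (fun s hs r hr => ((hV s hs.1).mono (Ici_subset_Ici.2 hs.1)).liminf_right_slope_le hr)
    le_rfl (fun s hs => by simpa using hbound s hs.1) t ⟨ht, le_rfl⟩
  rwa [gronwallBound_ε0] at hgronwall

theorem stmt_14_general {n : ℕ} (P : Matrix (Fin n) (Fin n) ℝ)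
    (f : (Fin n → ℝ) → (Fin n → ℝ)) (hf : ContDiff ℝ 1 f)
    (c : ℝ)
    (hL : ∀ x, (-(P * jac f x + (jac f x)ᵀ * P + (2 * c) • P)).PosSemidef)
    (x : ℝ → (Fin n → ℝ))
    (hx : ∀ t ∈ Ici (0:ℝ), HasDerivWithinAt x (f (x t)) (Ici 0) t) :
    ∀ t ∈ Ici (0:ℝ),
      f (x t) ⬝ᵥ P.mulVec (f (x t)) ≤
        (f (x 0) ⬝ᵥ P.mulVec (f (x 0))) * Real.exp (-(2 * c) * t) := by
  have hfd : Differentiable ℝ f := hf.differentiable one_ne_zero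
  have hfx : ∀ s ∈ Ici (0:ℝ),
      HasDerivWithinAt (fun τ => f (x τ)) (jac f (x s) *ᵥ f (x s)) (Ici 0) s := fun s hs =>
    ((hfd (x s)).hasFDerivAt.comp_hasDerivWithinAt s (hx s hs)).congr_deriv
      (LinearMap.toMatrix'_mulVec _ _).symm
  simpa using le_mul_exp_of_hasDerivWithinAt_le_mul (fun s hs => (hfx s hs).dotProduct_mulVec P)
    (fun s _ => (hL (x s)).dotProduct_mulVec_mulVec_add_le (f (x s)))

/-- Krasovskii's theorem: if `PJ(x) + J(x)ᵀP ≤ -2cP` for all `x`, then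
`V(x) = f(x)ᵀPf(x)` decreases like `e^{-2ct}` along solutions. -/
theorem stmt_14 {n : ℕ} (P : Matrix (Fin n) (Fin n) ℝ) (hP : P.PosDef)
    (f : (Fin n → ℝ) → (Fin n → ℝ)) (hf : ContDiff ℝ 1 f)
    (c : ℝ) (hc : 0 < c)
    (hL : ∀ x, (-(P * jac f x + (jac f x)ᵀ * P + (2 * c) • P)).PosSemidef)
    (x : ℝ → (Fin n → ℝ))
    (hx : ∀ t ∈ Ici (0:ℝ), HasDerivWithinAt x (f (x t)) (Ici 0) t) :
    ∀ t ∈ Ici (0:ℝ),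
      f (x t) ⬝ᵥ P.mulVec (f (x t)) ≤
        (f (x 0) ⬝ᵥ P.mulVec (f (x 0))) * Real.exp (-(2 * c) * t) :=
  stmt_14_general P f hf c hL x hx
end

section
/- Let f : ℝ → ℝ be C¹ with f'(x) ≤ −c < 0 for all x. Then for every solution x(t) of ẋ = f(x), |f(x(t))| ≤ |f(x(0))| e^{−ct} for all t ≥ 0. -/
open Matrix Filter Set Topology

/-! The argument is Grönwall's inequality applied to `(f ∘ x)²`: along a solution,
`d/dt f(x(t)) = f'(x(t)) f(x(t))`, so `d/dt f(x(t))² = 2 f'(x(t)) f(x(t))² ≤ -2c f(x(t))²`,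
whence `f(x(t))² ≤ f(x(0))² e^{-2ct}`. -/

theorem le_mul_exp_of_hasDerivWithinAt_Ici {g g' : ℝ → ℝ} {a : ℝ}
    (hg : ∀ t ∈ Ici (0:ℝ), HasDerivWithinAt g (g' t) (Ici 0) t)
    (hle : ∀ t ∈ Ici (0:ℝ), g' t ≤ a * g t) :
    ∀ t ∈ Ici (0:ℝ), g t ≤ g 0 * Real.exp (a * t) := by
  intro T hT
  have hcont : ContinuousOn g (Icc 0 T) := fun t ht =>
    (hg t ht.1).continuousWithinAt.mono Icc_subset_Ici_self
  have hT' := le_gronwallBound_of_liminf_deriv_right_le hcont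
    (fun t ht _ hr => ((hg t ht.1).mono (Ici_subset_Ici.2 ht.1)).liminf_right_slope_le hr)
    le_rfl (fun t ht => (add_zero (a * g t)).symm ▸ hle t ht.1) T ⟨hT, le_rfl⟩
  rwa [sub_zero, gronwallBound_ε0] at hT'

theorem abs_le_mul_exp_of_hasDerivWithinAt_Ici {y y' : ℝ → ℝ} {a : ℝ}
    (hy : ∀ t ∈ Ici (0:ℝ), HasDerivWithinAt y (y' t) (Ici 0) t)
    (hle : ∀ t ∈ Ici (0:ℝ), y t * y' t ≤ a * y t ^ 2) :
    ∀ t ∈ Ici (0:ℝ), |y t| ≤ |y 0| * Real.exp (a * t) := by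
  intro t ht
  have hsq : y t ^ 2 ≤ y 0 ^ 2 * Real.exp (2 * a * t) :=
    le_mul_exp_of_hasDerivWithinAt_Ici (g := fun s => y s ^ 2) (g' := fun s => 2 * y s * y' s)
      (fun s hs => by simpa using (hy s hs).fun_pow 2) (fun s hs => by linarith [hle s hs]) t ht
  rw [← sq_le_sq₀ (abs_nonneg _) (by positivity), mul_pow, sq_abs, sq_abs, ← Real.exp_nat_mul]
  calc y t ^ 2 ≤ y 0 ^ 2 * Real.exp (2 * a * t) := hsq
    _ = y 0 ^ 2 * Real.exp ((2 : ℕ) * (a * t)) := by push_cast; ring_nf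

theorem stmt_18_general (f : ℝ → ℝ) (hf : ContDiff ℝ 1 f)
    (c : ℝ) (hder : ∀ x, deriv f x ≤ -c)
    (x : ℝ → ℝ) (hx : ∀ t ∈ Ici (0:ℝ), HasDerivWithinAt x (f (x t)) (Ici 0) t) :
    ∀ t ∈ Ici (0:ℝ), |f (x t)| ≤ |f (x 0)| * Real.exp (-c * t) := by
  refine abs_le_mul_exp_of_hasDerivWithinAt_Ici
    (fun t ht => (hf.differentiable one_ne_zero (x t)).hasDerivAt.comp_hasDerivWithinAt t (hx t ht))
    fun t _ => ?_
  calc f (x t) * (deriv f (x t) * f (x t)) = deriv f (x t) * f (x t) ^ 2 := by ring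
    _ ≤ -c * f (x t) ^ 2 := mul_le_mul_of_nonneg_right (hder _) (sq_nonneg _)

/-- The scalar case: `f' ≤ -c < 0` implies `|f(x(t))| ≤ |f(x(0))| e^{-ct}`. -/
theorem stmt_18 (f : ℝ → ℝ) (hf : ContDiff ℝ 1 f)
    (c : ℝ) (hc : 0 < c) (hder : ∀ x, deriv f x ≤ -c)
    (x : ℝ → ℝ) (hx : ∀ t ∈ Ici (0:ℝ), HasDerivWithinAt x (f (x t)) (Ici 0) t) :
    ∀ t ∈ Ici (0:ℝ), |f (x t)| ≤ |f (x 0)| * Real.exp (-c * t) :=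
  stmt_18_general f hf c hder x hx
end
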